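/- arXiv:1312.2166 — 5 statements merged into one kernel-verified Lean document; each statement's English description precedes it below -/
import Mathlib

section
/- Let M be a positive integer and let α₀, α₁, …, α_M be a log-concave sequence of nonnegative reals summing to 1. Then the mixture density h(x) = Σ_{i=0}^{M} αᵢ · (1/β(M-i+1, i+1)) · x^{M-i} · (1-x)^i of the Beta(M-i+1, i+1) densities with mixing weights αᵢ is log-concave on (0, 1). -/
open Real Set

/-- The Beta function `β(a,b) = Γ(a)Γ(b)/Γ(a+b)`. -/
noncomputable def betaFun (a b : ℝ) : ℝ :=
  Real.Gamma a * Real.Gamma b / Real.Gamma (a + b)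

/-- A nonnegative function is log-concave on a set if
`f (λx + (1-λ)y) ≥ f x ^ λ * f y ^ (1-λ)` for all `x, y` in the set and `0 < λ < 1`. -/
def IsLogConcaveOn (S : Set ℝ) (f : ℝ → ℝ) : Prop :=
  ∀ x ∈ S, ∀ y ∈ S, ∀ l : ℝ, 0 < l → l < 1 →
    f x ^ l * f y ^ (1 - l) ≤ f (l * x + (1 - l) * y)

/-!
After `1 / β(M - i + 1, i + 1) = (M + 1) * C(M, i)` the density is `(M + 1) * B`, where `B` is the
Bernstein polynomial with coefficients `αᵢ`. De Casteljau's recursion writes every stage as the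
convex combination `x * b k + (1 - x) * b (k + 1)` of the previous one, and such a combination of a
log-concave sequence and its shift is again log-concave. Both derivatives of `B` are differences of
earlier stages, and log-concavity of stage `M - 2` is exactly what gives `B'' B ≤ B'²`, i.e.
concavity of `log B`.
-/

open Finset

def IsLogConcaveUpTo (N : ℕ) (a : ℕ → ℝ) : Prop :=
  ∀ i j : ℕ, 1 ≤ i → i ≤ j → j + 1 ≤ N → a (i - 1) * a (j + 1) ≤ a i * a j

theorem IsLogConcaveUpTo.convexComb_shift {N : ℕ} {a : ℕ → ℝ} (ha : IsLogConcaveUpTo N a)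
    {x : ℝ} (hx0 : 0 ≤ x) (hx1 : x ≤ 1) :
    IsLogConcaveUpTo (N - 1) (fun k => x * a k + (1 - x) * a (k + 1)) := by
  intro i j hi hij hj
  have h₁ : a (i - 1) * a (j + 1) ≤ a i * a j := ha i j hi hij (by omega)
  have h₂ : a i * a (j + 2) ≤ a (i + 1) * a (j + 1) :=
    ha (i + 1) (j + 1) (by omega) (by omega) (by omega)
  have h₃ : a (i - 1) * a (j + 2) ≤ a (i + 1) * a j :=
    calc a (i - 1) * a (j + 2) ≤ a i * a (j + 1) := ha i (j + 1) hi (by omega) (by omega)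
      _ ≤ a (i + 1) * a j := by
        rcases hij.lt_or_eq with hlt | rfl
        · exact ha (i + 1) j (by omega) hlt (by omega)
        · rw [mul_comm]
  dsimp only
  rw [show i - 1 + 1 = i by omega]
  linear_combination (x * x) * h₁ + ((1 - x) * (1 - x)) * h₂ + (x * (1 - x)) * h₃

/-- Stage `m`, index `k` of de Casteljau's algorithm for the Bernstein coefficients `β`. -/
noncomputable def deCasteljau (β : ℕ → ℝ) (m k : ℕ) (x : ℝ) : ℝ :=
  ∑ t ∈ range (m + 1), (m.choose t : ℝ) * β (k + t) * x ^ (m - t) * (1 - x) ^ t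

@[simp]
theorem deCasteljau_zero (β : ℕ → ℝ) (k : ℕ) (x : ℝ) : deCasteljau β 0 k x = β k := by
  simp [deCasteljau]

theorem deCasteljau_succ (β : ℕ → ℝ) (m k : ℕ) (x : ℝ) :
    deCasteljau β (m + 1) k x =
      x * deCasteljau β m k x + (1 - x) * deCasteljau β m (k + 1) x := by
  rw [deCasteljau, deCasteljau, deCasteljau, mul_sum, mul_sum]
  simp only [mul_assoc]
  rw [sum_choose_succ_mul (fun t s => β (k + t) * (x ^ s * (1 - x) ^ t)) m]
  congr 1 <;> refine sum_congr rfl fun t ht => ?_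
  · rw [Nat.sub_add_comm (mem_range_succ_iff.1 ht), pow_succ]
    ring
  · rw [← add_assoc, add_right_comm k t 1, pow_succ]
    ring

theorem IsLogConcaveUpTo.deCasteljau {M : ℕ} {β : ℕ → ℝ} (hβ : IsLogConcaveUpTo M β)
    {x : ℝ} (hx0 : 0 ≤ x) (hx1 : x ≤ 1) (m : ℕ) :
    IsLogConcaveUpTo (M - m) (fun k => deCasteljau β m k x) := by
  induction m with
  | zero => simpa using hβ
  | succ m ih => simpa only [deCasteljau_succ, Nat.sub_add_eq] using ih.convexComb_shift hx0 hx1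

theorem hasDerivAt_deCasteljau (β : ℕ → ℝ) (m k : ℕ) (x : ℝ) :
    HasDerivAt (deCasteljau β m k)
      (m * (deCasteljau β (m - 1) k x - deCasteljau β (m - 1) (k + 1) x)) x := by
  induction m generalizing k with
  | zero => simpa [funext (deCasteljau_zero β k)] using hasDerivAt_const x (β k)
  | succ m ih =>
    have h := ((hasDerivAt_id' x).mul (ih k)).add
      (((hasDerivAt_const x 1).sub (hasDerivAt_id' x)).mul (ih (k + 1)))
    rw [funext (deCasteljau_succ β m k)]
    refine h.congr_deriv ?_
    simp only [Nat.add_sub_cancel, Pi.sub_apply]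
    rcases m with _ | m
    · simp only [deCasteljau_zero]
      push_cast
      ring
    · simp only [deCasteljau_succ, Nat.add_sub_cancel]
      push_cast
      ring

/-- The left factor is `B''` for `B = deCasteljau β M 0`. With `F`, `f` the stages `M - 1`, `M - 2`,
the identity `(F₀ - F₁)² - B (f₀ - 2 f₁ + f₂) = f₁² - f₀ f₂` reduces `B'' B ≤ B'²` to
`f₀ f₂ ≤ f₁²`. -/
theorem deCasteljau_deriv2_mul_le_sq {M : ℕ} {β : ℕ → ℝ} (hβ : IsLogConcaveUpTo M β)
    {x : ℝ} (hx0 : 0 ≤ x) (hx1 : x ≤ 1) :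
    M * ((M - 1 : ℕ) * (deCasteljau β (M - 1 - 1) 0 x - deCasteljau β (M - 1 - 1) 1 x)
        - (M - 1 : ℕ) * (deCasteljau β (M - 1 - 1) 1 x - deCasteljau β (M - 1 - 1) 2 x))
      * deCasteljau β M 0 x
      ≤ (M * (deCasteljau β (M - 1) 0 x - deCasteljau β (M - 1) 1 x)) ^ 2 := by
  obtain _ | _ | m := M
  · simp
  · simp only [Nat.sub_self, Nat.cast_zero, zero_mul, sub_zero, mul_zero, zero_mul]
    positivity
  · have hlc :
        deCasteljau β m 0 x * deCasteljau β m 2 x ≤ deCasteljau β m 1 x * deCasteljau β m 1 x :=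
      hβ.deCasteljau hx0 hx1 m 1 1 le_rfl le_rfl (by omega)
    have hsq : 0 ≤ ((m : ℝ) + 2) * (deCasteljau β (m + 1) 0 x - deCasteljau β (m + 1) 1 x) ^ 2 := by
      positivity
    simp only [Nat.add_sub_cancel, deCasteljau_succ] at hsq ⊢
    push_cast
    linear_combination (((m : ℝ) + 2) * (m + 1)) * hlc + hsq

theorem deCasteljau_pos {M : ℕ} {β : ℕ → ℝ} (hβ0 : ∀ i ≤ M, 0 ≤ β i) (hpos : ∃ i ≤ M, 0 < β i)
    {x : ℝ} (hx : x ∈ Ioo (0 : ℝ) 1) : 0 < deCasteljau β M 0 x := by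
  obtain ⟨hx0, hx1⟩ := hx
  obtain ⟨j, hjM, hj⟩ := hpos
  have hy : 0 < 1 - x := sub_pos.2 hx1
  refine sum_pos' (fun t ht => ?_) ⟨j, mem_range_succ_iff.2 hjM, ?_⟩
  · have := hβ0 t (mem_range_succ_iff.1 ht)
    rw [zero_add]
    positivity
  · have := Nat.choose_pos hjM
    rw [zero_add]
    positivity

theorem IsLogConcaveOn.of_concaveOn_log {S : Set ℝ} {f : ℝ → ℝ} (hpos : ∀ x ∈ S, 0 < f x)
    (hf : ConcaveOn ℝ S (fun x => log (f x))) : IsLogConcaveOn S f := by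
  intro x hx y hy l hl0 hl1
  have hz := hf.1 hx hy hl0.le (sub_nonneg.2 hl1.le) (add_sub_cancel l 1)
  have h := hf.2 hx hy hl0.le (sub_nonneg.2 hl1.le) (add_sub_cancel l 1)
  simp only [smul_eq_mul] at hz h
  calc f x ^ l * f y ^ (1 - l) = exp (l * log (f x) + (1 - l) * log (f y)) := by
        rw [exp_add, rpow_def_of_pos (hpos x hx), rpow_def_of_pos (hpos y hy), mul_comm l,
          mul_comm (1 - l)]
    _ ≤ exp (log (f (l * x + (1 - l) * y))) := exp_le_exp.2 h
    _ = f (l * x + (1 - l) * y) := exp_log (hpos _ hz)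

theorem IsLogConcaveOn.const_mul {S : Set ℝ} {f : ℝ → ℝ} (hf : IsLogConcaveOn S f)
    (hf0 : ∀ x ∈ S, 0 ≤ f x) {c : ℝ} (hc : 0 ≤ c) : IsLogConcaveOn S (fun x => c * f x) := by
  intro x hx y hy l hl0 hl1
  have hc1 : c ^ l * c ^ (1 - l) = c := by
    rw [← rpow_add' hc (by rw [add_sub_cancel]; exact one_ne_zero), add_sub_cancel, rpow_one]
  calc (c * f x) ^ l * (c * f y) ^ (1 - l)
        = (c ^ l * c ^ (1 - l)) * (f x ^ l * f y ^ (1 - l)) := by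
        rw [mul_rpow hc (hf0 x hx), mul_rpow hc (hf0 y hy)]
        ring
    _ = c * (f x ^ l * f y ^ (1 - l)) := by rw [hc1]
    _ ≤ c * f (l * x + (1 - l) * y) := mul_le_mul_of_nonneg_left (hf x hx y hy l hl0 hl1) hc

theorem concaveOn_log_of_deriv2_mul_le_sq {S : Set ℝ} (hS : Convex ℝ S) {f f' f'' : ℝ → ℝ}
    (hf : ∀ x ∈ S, HasDerivAt f (f' x) x) (hf' : ∀ x ∈ S, HasDerivAt f' (f'' x) x)
    (hpos : ∀ x ∈ S, 0 < f x) (h : ∀ x ∈ S, f'' x * f x ≤ f' x ^ 2) :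
    ConcaveOn ℝ S (fun x => log (f x)) := by
  refine concaveOn_of_hasDerivWithinAt2_nonpos hS (f' := fun x => f' x / f x)
    (f'' := fun x => (f'' x * f x - f' x * f' x) / f x ^ 2)
    (fun x hx => ((hf x hx).continuousAt.log (hpos x hx).ne').continuousWithinAt) ?_ ?_ ?_
  all_goals intro x hx; replace hx := interior_subset hx
  · exact ((hf x hx).log (hpos x hx).ne').hasDerivWithinAt
  · exact ((hf' x hx).div (hf x hx) (hpos x hx).ne').hasDerivWithinAt
  · exact div_nonpos_of_nonpos_of_nonneg (by linarith [h x hx, sq (f' x)]) (sq_nonneg _)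

theorem isLogConcaveOn_deCasteljau {M : ℕ} {β : ℕ → ℝ} (hβ0 : ∀ i ≤ M, 0 ≤ β i)
    (hβ : IsLogConcaveUpTo M β) (hpos : ∃ i ≤ M, 0 < β i) :
    IsLogConcaveOn (Ioo 0 1) (deCasteljau β M 0) := by
  refine IsLogConcaveOn.of_concaveOn_log (fun x hx => deCasteljau_pos hβ0 hpos hx) ?_
  exact concaveOn_log_of_deriv2_mul_le_sq (convex_Ioo 0 1)
    (fun x _ => hasDerivAt_deCasteljau β M 0 x)
    (fun x _ => ((hasDerivAt_deCasteljau β (M - 1) 0 x).sub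
      (hasDerivAt_deCasteljau β (M - 1) 1 x)).const_mul (M : ℝ))
    (fun x hx => deCasteljau_pos hβ0 hpos hx)
    (fun x hx => deCasteljau_deriv2_mul_le_sq hβ hx.1.le hx.2.le)

theorem inv_betaFun_natCast_add_one (m n : ℕ) :
    (betaFun (m + 1) (n + 1))⁻¹ = (m + n + 1) * (m + n).choose n := by
  rw [betaFun, show (m : ℝ) + 1 + (n + 1) = ((m + n + 1 : ℕ) : ℝ) + 1 by push_cast; ring,
    Gamma_nat_eq_factorial, Gamma_nat_eq_factorial, Gamma_nat_eq_factorial, ← Nat.choose_symm_add,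
    Nat.cast_add_choose, Nat.factorial_succ]
  push_cast
  field_simp

theorem log_concave_beta_mixture_density_discrete_general
    (M : ℕ) (α : ℕ → ℝ)
    (hα_nonneg : ∀ i ≤ M, 0 ≤ α i)
    (hα_logconcave : ∀ i j : ℕ, 1 ≤ i → i ≤ j → j + 1 ≤ M →
      α (i - 1) * α (j + 1) ≤ α i * α j)
    (hα_prob : ∑ i ∈ Finset.range (M + 1), α i = 1) :
    IsLogConcaveOn (Set.Ioo (0 : ℝ) 1)
      (fun x : ℝ => ∑ i ∈ Finset.range (M + 1),
        α i * (1 / betaFun ((M : ℝ) - i + 1) (i + 1)) * x ^ (M - i) * (1 - x) ^ i) := by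
  have hdensity : (fun x : ℝ => ∑ i ∈ range (M + 1),
      α i * (1 / betaFun ((M : ℝ) - i + 1) (i + 1)) * x ^ (M - i) * (1 - x) ^ i)
      = fun x => ((M : ℝ) + 1) * deCasteljau α M 0 x := by
    funext x
    rw [deCasteljau, mul_sum]
    refine sum_congr rfl fun i hi => ?_
    have hiM : i ≤ M := mem_range_succ_iff.1 hi
    rw [← Nat.cast_sub hiM, one_div, inv_betaFun_natCast_add_one, ← Nat.cast_add,
      Nat.sub_add_cancel hiM, zero_add]
    ring
  obtain ⟨i, hi, hαi⟩ : ∃ i ∈ range (M + 1), 0 < α i :=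
    exists_lt_of_sum_lt (by simp [hα_prob])
  have hpos : ∃ i ≤ M, 0 < α i := ⟨i, mem_range_succ_iff.1 hi, hαi⟩
  rw [hdensity]
  exact (isLogConcaveOn_deCasteljau hα_nonneg hα_logconcave hpos).const_mul
    (fun x hx => (deCasteljau_pos hα_nonneg hpos hx).le) (by positivity)

theorem log_concave_beta_mixture_density_discrete
    (M : ℕ) (hM : 0 < M) (α : ℕ → ℝ)
    (hα_nonneg : ∀ i ≤ M, 0 ≤ α i)
    (hα_logconcave : ∀ i j : ℕ, 1 ≤ i → i ≤ j → j + 1 ≤ M →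
      α (i - 1) * α (j + 1) ≤ α i * α j)
    (hα_prob : ∑ i ∈ Finset.range (M + 1), α i = 1) :
    IsLogConcaveOn (Set.Ioo (0 : ℝ) 1)
      (fun x : ℝ => ∑ i ∈ Finset.range (M + 1),
        α i * (1 / betaFun ((M : ℝ) - i + 1) (i + 1)) * x ^ (M - i) * (1 - x) ^ i) :=
  log_concave_beta_mixture_density_discrete_general M α hα_nonneg hα_logconcave hα_prob
end

section
/- Let M > 1, q > 0 and n > -2 be real numbers, and let B = {s ∈ ℝ : |s - (n + 1 - s)| ≤ q, 0 ≤ s ≤ M, and 0 ≤ n + 1 - s ≤ M}. Then ∫_B C(M-1, s)·C(M-1, n-s) ds ≤ ∫_B C(M, s)·C(M-2, n-s) ds. -/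
open Real MeasureTheory Set

/-- Generalized binomial coefficient `C(M,s) = Γ(M+1)/(Γ(s+1)·Γ(M-s+1))`. -/
noncomputable def genBinom (M s : ℝ) : ℝ :=
  Real.Gamma (M + 1) / (Real.Gamma (s + 1) * Real.Gamma (M - s + 1))

/-!
Write `T(s) = C(M-1, s-1)·C(M-2, n-s)` (`pascalTerm`). Pascal's rule, applied once in each
factor, turns the difference of the two integrands into `T(s) - T(s+1)`. The set `B` is an
interval `[a, n+1-a]`, so the integral of the difference telescopes to
`∫_a^{a+1} (T(s) - T(n+2-s)) ds`. The absorption identity `C(N,k)·k = N·C(N-1,k-1)` gives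
`T(n+2-s)·(n+1-s) = T(s)·(s-1)`, hence `T(n+2-s) ≤ T(s)` on `[a, min(a+1, n+1-a)]`, where
`2s ≤ n+2`; the remaining part `[n+1-a, a+1]` is symmetric about `(n+2)/2`, where the integrand
is odd.
-/

namespace intervalIntegral

theorem integral_sub_comp_add_one {T : ℝ → ℝ} (hT : Continuous T) (a b : ℝ) :
    ∫ x in a..b, (T x - T (x + 1)) = ∫ x in a..a + 1, (T x - T (a + b + 1 - x)) := by
  have hT' (c d : ℝ) : IntervalIntegrable T volume c d := hT.intervalIntegrable c d
  rw [integral_sub (hT' _ _)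
      ((by fun_prop : Continuous fun x => T (x + 1)).intervalIntegrable _ _),
    integral_sub (hT' _ _)
      ((by fun_prop : Continuous fun x => T (a + b + 1 - x)).intervalIntegrable _ _),
    integral_comp_add_right, integral_comp_sub_left,
    integral_interval_sub_interval_comm (hT' _ _) (hT' _ _) (hT' _ _)]
  ring_nf

theorem integral_sub_comp_sub_left_self {f : ℝ → ℝ} (hf : Continuous f) (a b : ℝ) :
    ∫ x in a..b, (f x - f (a + b - x)) = 0 := by
  rw [integral_sub (hf.intervalIntegrable _ _)
    ((by fun_prop : Continuous fun x => f (a + b - x)).intervalIntegrable _ _),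
    integral_comp_sub_left, add_sub_cancel_right, add_sub_cancel_left, sub_self]

end intervalIntegral

theorem Real.continuous_Gamma_inv : Continuous fun s : ℝ => (Gamma s)⁻¹ := by
  have h : (fun s : ℝ => (Gamma s)⁻¹) = fun s : ℝ => ((Complex.Gamma s)⁻¹).re := by
    funext s
    rw [Complex.Gamma_ofReal, ← Complex.ofReal_inv, Complex.ofReal_re]
  rw [h]
  exact Complex.continuous_re.comp
    (Complex.differentiable_one_div_Gamma.continuous.comp Complex.continuous_ofReal)

namespace genBinom

@[fun_prop]
theorem continuous (M : ℝ) : Continuous (genBinom M) := by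
  have h : genBinom M =
      fun s => Gamma (M + 1) * (Gamma (s + 1))⁻¹ * (Gamma (M - s + 1))⁻¹ := by
    funext s
    rw [genBinom, div_eq_mul_inv, mul_inv, mul_assoc]
  rw [h]
  exact (continuous_const.mul (continuous_Gamma_inv.comp (by fun_prop))).mul
    (continuous_Gamma_inv.comp (by fun_prop))

theorem pos {M s : ℝ} (hM : -1 < M) (h₁ : -1 < s) (h₂ : s < M + 1) : 0 < genBinom M s := by
  unfold genBinom
  have := Gamma_pos_of_pos (by linarith : 0 < s + 1)
  have := Gamma_pos_of_pos (by linarith : 0 < M - s + 1)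
  have := Gamma_pos_of_pos (by linarith : 0 < M + 1)
  positivity

theorem symm (M s : ℝ) : genBinom M (M - s) = genBinom M s := by
  rw [genBinom, genBinom, sub_sub_cancel, mul_comm]

theorem mul_self {M : ℝ} (hM : M ≠ 0) (s : ℝ) :
    genBinom M s * s = M * genBinom (M - 1) (s - 1) := by
  rcases eq_or_ne s 0 with rfl | hs
  · simp [genBinom, Gamma_zero]
  simp only [genBinom, sub_add_cancel, show M - 1 - (s - 1) + 1 = M - s + 1 by ring,
    Gamma_add_one hM, Gamma_add_one hs]
  field_simp

theorem mul_sub_self {M : ℝ} (hM : M ≠ 0) (s : ℝ) :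
    genBinom M s * (M - s) = M * genBinom (M - 1) s := by
  rw [← symm M s, mul_self hM, show M - s - 1 = M - 1 - s by ring, symm]

theorem pascal {M : ℝ} (hM : M ≠ 0) (s : ℝ) :
    genBinom M s = genBinom (M - 1) (s - 1) + genBinom (M - 1) s := by
  refine mul_left_cancel₀ hM ?_
  linear_combination mul_self hM s + mul_sub_self hM s

end genBinom

noncomputable def pascalTerm (M n s : ℝ) : ℝ :=
  genBinom (M - 1) (s - 1) * genBinom (M - 2) (n - s)

namespace pascalTerm

theorem continuous (M n : ℝ) : Continuous (pascalTerm M n) := by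
  unfold pascalTerm
  fun_prop

variable {M : ℝ} (n : ℝ)

theorem sub_add_one (hM₀ : M ≠ 0) (hM₁ : M ≠ 1) (s : ℝ) :
    pascalTerm M n s - pascalTerm M n (s + 1) =
      genBinom M s * genBinom (M - 2) (n - s) - genBinom (M - 1) s * genBinom (M - 1) (n - s) := by
  have hM₁' : M - 1 ≠ 0 := sub_ne_zero.2 hM₁
  rw [genBinom.pascal hM₀ s, genBinom.pascal hM₁' (n - s), pascalTerm, pascalTerm,
    add_sub_cancel_right, show M - 1 - 1 = M - 2 by ring, show n - (s + 1) = n - s - 1 by ring]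
  ring

theorem reflect_mul (hM : M ≠ 1) (s : ℝ) :
    pascalTerm M n (n + 2 - s) * (n + 1 - s) = pascalTerm M n s * (s - 1) := by
  have hM' : M - 1 ≠ 0 := sub_ne_zero.2 hM
  have h₁ := genBinom.mul_self hM' (n + 1 - s)
  have h₂ := genBinom.mul_self hM' (s - 1)
  rw [show M - 1 - 1 = M - 2 by ring] at h₁ h₂
  rw [show n + 1 - s - 1 = n - s by ring] at h₁
  rw [pascalTerm, pascalTerm, show n + 2 - s - 1 = n + 1 - s by ring,
    show n - (n + 2 - s) = s - 1 - 1 by ring]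
  linear_combination genBinom (M - 2) (s - 1 - 1) * h₁ - genBinom (M - 2) (n - s) * h₂

theorem pos (hM : 1 < M) {s : ℝ} (h₀ : 0 < s) (hsM : s < M + 1) (hsn : s < n + 1)
    (hnM : n + 1 - M < s) :
    0 < pascalTerm M n s :=
  mul_pos (genBinom.pos (by linarith) (by linarith) (by linarith))
    (genBinom.pos (by linarith) (by linarith) (by linarith))

theorem reflect_le (hM : 1 < M) {s : ℝ} (h₀ : 0 < s) (hsM : s < M + 1) (hsn : s < n + 1)
    (hnM : n + 1 - M < s) (hs : 2 * s ≤ n + 2) :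
    pascalTerm M n (n + 2 - s) ≤ pascalTerm M n s := by
  have hpos := pos n hM h₀ hsM hsn hnM
  have hb : 0 < n + 1 - s := by linarith
  refine le_of_mul_le_mul_right ?_ hb
  rw [reflect_mul n hM.ne']
  exact mul_le_mul_of_nonneg_left (by linarith) hpos.le

end pascalTerm

open intervalIntegral in
theorem integral_genBinom_mul_le_integral {M : ℝ} (hM : 1 < M) (n : ℝ) {a : ℝ} (ha₀ : 0 ≤ a)
    (haM : n + 1 - M ≤ a) (ha : 2 * a ≤ n + 1) :
    ∫ s in a..n + 1 - a, genBinom (M - 1) s * genBinom (M - 1) (n - s) ≤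
      ∫ s in a..n + 1 - a, genBinom M s * genBinom (M - 2) (n - s) := by
  set T := pascalTerm M n
  have hT : Continuous T := pascalTerm.continuous M n
  have hdiff : (∫ s in a..n + 1 - a, genBinom M s * genBinom (M - 2) (n - s)) -
      ∫ s in a..n + 1 - a, genBinom (M - 1) s * genBinom (M - 1) (n - s) =
        ∫ x in a..a + 1, (T x - T (n + 2 - x)) := by
    rw [← integral_sub ((by fun_prop : Continuous _).intervalIntegrable _ _)
      ((by fun_prop : Continuous _).intervalIntegrable _ _)]
    simp_rw [← pascalTerm.sub_add_one n (by linarith : M ≠ 0) hM.ne']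
    rw [integral_sub_comp_add_one hT, show a + (n + 1 - a) + 1 = n + 2 by ring]
  have hnonneg (c : ℝ) (hac : a ≤ c) (hc₁ : c ≤ a + 1) (hc₂ : c ≤ n + 1 - a) :
      0 ≤ ∫ x in a..c, (T x - T (n + 2 - x)) := by
    rw [integral_of_le hac, integral_Ioc_eq_integral_Ioo]
    refine setIntegral_nonneg measurableSet_Ioo fun x ⟨hax, hxc⟩ => sub_nonneg.2 ?_
    exact pascalTerm.reflect_le n hM (by linarith) (by linarith) (by linarith) (by linarith)
      (by linarith)
  rw [← sub_nonneg, hdiff]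
  rcases le_or_gt (a + 1) (n + 1 - a) with h | h
  · exact hnonneg _ (by linarith) le_rfl h
  have hodd := integral_sub_comp_sub_left_self hT (n + 1 - a) (a + 1)
  rw [show n + 1 - a + (a + 1) = n + 2 by ring] at hodd
  rw [← integral_add_adjacent_intervals (b := n + 1 - a)
    ((by fun_prop : Continuous _).intervalIntegrable _ _)
    ((by fun_prop : Continuous _).intervalIntegrable _ _), hodd, add_zero]
  exact hnonneg _ (by linarith) h.le le_rfl

theorem setOf_abs_sub_le_eq_Icc (M q n : ℝ) :
    {s : ℝ | |s - (n + 1 - s)| ≤ q ∧ 0 ≤ s ∧ s ≤ M ∧ 0 ≤ n + 1 - s ∧ n + 1 - s ≤ M} =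
      Icc (max (max 0 (n + 1 - M)) ((n + 1 - q) / 2))
        (n + 1 - max (max 0 (n + 1 - M)) ((n + 1 - q) / 2)) := by
  ext s
  rw [mem_ofPred_eq, mem_Icc, abs_le, le_sub_comm (a := s) (b := n + 1), max_le_iff,
    max_le_iff, max_le_iff, max_le_iff]
  constructor
  · rintro ⟨⟨h₁, h₂⟩, h₃, h₄, h₅, h₆⟩
    refine ⟨⟨⟨h₃, ?_⟩, ?_⟩, ⟨h₅, ?_⟩, ?_⟩ <;> linarith
  · rintro ⟨⟨⟨h₁, h₂⟩, h₃⟩, ⟨h₄, h₅⟩, h₆⟩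
    refine ⟨⟨?_, ?_⟩, h₁, ?_, h₄, ?_⟩ <;> linarith

theorem genBinom_integral_ineq_B_general
    (M q n : ℝ) (hM : 1 < M)
    (B : Set ℝ)
    (hB : B = {s : ℝ | |s - (n + 1 - s)| ≤ q ∧ 0 ≤ s ∧ s ≤ M ∧
      0 ≤ n + 1 - s ∧ n + 1 - s ≤ M}) :
    (∫ s in B, genBinom (M - 1) s * genBinom (M - 1) (n - s)) ≤
      ∫ s in B, genBinom M s * genBinom (M - 2) (n - s) := by
  rw [hB, setOf_abs_sub_le_eq_Icc]
  set a := max (max 0 (n + 1 - M)) ((n + 1 - q) / 2)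
  rcases le_or_gt (2 * a) (n + 1) with ha | ha
  · have hab : a ≤ n + 1 - a := by linarith
    simp only [integral_Icc_eq_integral_Ioc, ← intervalIntegral.integral_of_le hab]
    exact integral_genBinom_mul_le_integral hM n (le_max_of_le_left (le_max_left _ _))
      (le_max_of_le_left (le_max_right _ _)) ha
  · rw [Icc_eq_empty (by linarith), setIntegral_empty, setIntegral_empty]

theorem genBinom_integral_ineq_B
    (M q n : ℝ) (hM : 1 < M) (hq : 0 < q) (hn : -2 < n)
    (B : Set ℝ)
    (hB : B = {s : ℝ | |s - (n + 1 - s)| ≤ q ∧ 0 ≤ s ∧ s ≤ M ∧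
      0 ≤ n + 1 - s ∧ n + 1 - s ≤ M}) :
    (∫ s in B, genBinom (M - 1) s * genBinom (M - 1) (n - s)) ≤
      ∫ s in B, genBinom M s * genBinom (M - 2) (n - s) :=
  genBinom_integral_ineq_B_general M q n hM B hB
end

section
/- Let M be a positive integer, n a nonnegative integer, and k an integer with k ≤ (n+1)/2. Then Σ_{i=k}^{n-k} (M-1 choose i)·(M-1 choose n-i) ≥ Σ_{i=k}^{n-k} (M choose i+1)·(M-2 choose n-i-1), where by convention (M choose i) = 0 whenever i < 0 or i > M. -/
/-!
Put `f i = C(M-1, i) C(M-2, n-i)`. Pascal's rule, applied to `C(M, i+1)` and to `C(M-1, n-i)`, gives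
`C(M-1, i) C(M-1, n-i) + f (i+1) = C(M, i+1) C(M-2, n-i-1) + f i`, so summed over `k ≤ i ≤ n-k`
it telescopes: the sum of the `C(M-1, i) C(M-1, n-i)` exceeds the other by `f k - f (n-k+1)`.
This difference is nonnegative since `k ≤ n+1-k` and, by the absorption identity
`m C(m-1, a-1) = a C(m, a)`, the ratio `C(m, a) / C(m-1, a-1) = m / a` decreases in `a`.
-/

/-- Binomial coefficient with integer arguments, zero by convention when the
lower index is negative or exceeds the upper index. -/
def binomZ (n k : ℤ) : ℕ :=
  if 0 ≤ k ∧ k ≤ n then n.toNat.choose k.toNat else 0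

open Finset

lemma binomZ_eq_zero_of_neg_left {n k : ℤ} (hn : n < 0) : binomZ n k = 0 := by
  unfold binomZ; rw [if_neg]; omega

lemma binomZ_eq_zero_of_neg_right {n k : ℤ} (hk : k < 0) : binomZ n k = 0 := by
  unfold binomZ; rw [if_neg]; omega

lemma binomZ_natCast (n k : ℕ) : binomZ n k = n.choose k := by
  unfold binomZ
  split_ifs with h
  · simp
  · exact (Nat.choose_eq_zero_of_lt (by omega)).symm

lemma binomZ_succ_succ {n : ℤ} (hn : 0 ≤ n) (k : ℤ) :
    binomZ (n + 1) (k + 1) = binomZ n k + binomZ n (k + 1) := by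
  rcases lt_trichotomy k (-1) with hk | rfl | hk
  · simp only [binomZ_eq_zero_of_neg_right (show k < 0 by omega),
      binomZ_eq_zero_of_neg_right (show k + 1 < 0 by omega)]
  · simp [binomZ, hn, add_nonneg]
  · lift n to ℕ using hn
    lift k to ℕ using (by omega)
    have h := Nat.choose_succ_succ n k
    rw [← binomZ_natCast, ← binomZ_natCast, ← binomZ_natCast] at h
    exact_mod_cast h

theorem Nat.choose_succ_succ_mul_choose_le {m a b : ℕ} (hab : a ≤ b) :
    (m + 1).choose (b + 1) * m.choose a ≤ (m + 1).choose (a + 1) * m.choose b := by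
  refine Nat.le_of_mul_le_mul_left ?_ m.succ_pos
  have ha := Nat.add_one_mul_choose_eq m a
  have hb := Nat.add_one_mul_choose_eq m b
  calc (m + 1) * ((m + 1).choose (b + 1) * m.choose a)
      = (m + 1).choose (b + 1) * (m + 1).choose (a + 1) * (a + 1) := by
        rw [mul_left_comm, ha]; ring
    _ ≤ (m + 1).choose (b + 1) * (m + 1).choose (a + 1) * (b + 1) := by gcongr
    _ = (m + 1) * ((m + 1).choose (a + 1) * m.choose b) := by
        rw [mul_left_comm, hb]; ring

lemma binomZ_succ_succ_mul_binomZ_le {m a b : ℤ} (hab : a ≤ b) :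
    binomZ (m + 1) (b + 1) * binomZ m a ≤ binomZ (m + 1) (a + 1) * binomZ m b := by
  rcases lt_or_ge a 0 with ha | ha
  · simp [binomZ_eq_zero_of_neg_right ha]
  rcases lt_or_ge m 0 with hm | hm
  · simp [binomZ_eq_zero_of_neg_left hm]
  lift m to ℕ using hm
  lift a to ℕ using ha
  lift b to ℕ using (by omega)
  have h := Nat.choose_succ_succ_mul_choose_le (m := m) (by omega : a ≤ b)
  rw [← binomZ_natCast, ← binomZ_natCast, ← binomZ_natCast, ← binomZ_natCast] at h
  exact_mod_cast h

lemma binomZ_mul_add_binomZ_mul_eq {N : ℤ} (hN : 0 ≤ N) (i j : ℤ) :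
    binomZ (N + 1) i * binomZ (N + 1) (j + 1) + binomZ (N + 1) (i + 1) * binomZ N j =
      binomZ (N + 2) (i + 1) * binomZ N j + binomZ (N + 1) i * binomZ N (j + 1) := by
  rw [show N + 2 = N + 1 + 1 by ring, binomZ_succ_succ (by omega : 0 ≤ N + 1),
    binomZ_succ_succ hN]
  ring

theorem Int.sum_Ico_add_eq_of_add_eq {M : Type*} [AddCommMonoid M] {f g h : ℤ → M}
    (step : ∀ i, g i + f (i + 1) = h i + f i) {a b : ℤ} (hab : a ≤ b) :
    ∑ i ∈ Ico a b, g i + f b = ∑ i ∈ Ico a b, h i + f a := by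
  induction b, hab using Int.leInduction with
  | base => simp
  | succ b hab ih =>
    rw [← insert_Ico_right_eq_Ico_add_one hab, sum_insert (by simp), sum_insert (by simp)]
    calc g b + ∑ i ∈ Ico a b, g i + f (b + 1)
        = ∑ i ∈ Ico a b, g i + (g b + f (b + 1)) := by abel
      _ = ∑ i ∈ Ico a b, g i + f b + h b := by rw [step]; abel
      _ = h b + ∑ i ∈ Ico a b, h i + f a := by rw [ih]; abel

theorem sum_binomZ_mul_binomZ_le (N n k : ℤ) (hk : 2 * k ≤ n + 1) :
    ∑ i ∈ Icc k (n - k), binomZ (N + 2) (i + 1) * binomZ N (n - i - 1) ≤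
      ∑ i ∈ Icc k (n - k), binomZ (N + 1) i * binomZ (N + 1) (n - i) := by
  rcases lt_or_ge N 0 with hN | hN
  · simp [binomZ_eq_zero_of_neg_left hN]
  set f : ℤ → ℕ := fun i => binomZ (N + 1) i * binomZ N (n - i)
  have step (i : ℤ) : binomZ (N + 1) i * binomZ (N + 1) (n - i) + f (i + 1) =
      binomZ (N + 2) (i + 1) * binomZ N (n - i - 1) + f i := by
    have h := binomZ_mul_add_binomZ_mul_eq hN i (n - i - 1)
    rw [sub_add_cancel] at h
    simpa only [f, ← sub_sub] using h
  have tele := Int.sum_Ico_add_eq_of_add_eq step (show k ≤ n - k + 1 by omega)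
  rw [Ico_add_one_right_eq_Icc] at tele
  have hf : f (n - k + 1) ≤ f k := by
    have h := binomZ_succ_succ_mul_binomZ_le (m := N) (show k - 1 ≤ n - k by omega)
    rwa [sub_add_cancel, show k - 1 = n - (n - k + 1) by ring] at h
  omega

theorem binom_sum_ineq_three_general
    (M : ℕ) (n : ℕ) (k : ℤ) (hk : 2 * k ≤ (n : ℤ) + 1) :
    (∑ i ∈ Finset.Icc k ((n : ℤ) - k),
        binomZ ((M : ℤ)) (i + 1) * binomZ ((M : ℤ) - 2) (n - i - 1)) ≤
      ∑ i ∈ Finset.Icc k ((n : ℤ) - k),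
        binomZ ((M : ℤ) - 1) i * binomZ ((M : ℤ) - 1) (n - i) := by
  have h := sum_binomZ_mul_binomZ_le ((M : ℤ) - 2) n k hk
  rwa [sub_add_cancel, show (M : ℤ) - 2 + 1 = M - 1 by ring] at h

theorem binom_sum_ineq_three
    (M : ℕ) (hM : 0 < M) (n : ℕ) (k : ℤ) (hk : 2 * k ≤ (n : ℤ) + 1) :
    (∑ i ∈ Finset.Icc k ((n : ℤ) - k),
        binomZ ((M : ℤ)) (i + 1) * binomZ ((M : ℤ) - 2) (n - i - 1)) ≤
      ∑ i ∈ Finset.Icc k ((n : ℤ) - k),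
        binomZ ((M : ℤ) - 1) i * binomZ ((M : ℤ) - 1) (n - i) :=
  binom_sum_ineq_three_general M n k hk
end

section
/- Let M > 1 be real and let α be a nonnegative, continuous log-concave function on (0, M), extended by zero outside (0, M). Then for every real n with -2 < n < 2M - 2, ∫ α(s)·α(n-s+1)·C(M-1, s)·C(M-1, n-s) ds ≤ ∫ α(s)·α(n-s+1)·C(M, s)·C(M-2, n-s) ds, where both integrals range over all s with 0 ≤ s ≤ M and 0 ≤ n + 1 - s ≤ M. -/
/-!
Write `φ s = α s * α (n + 1 - s)` and `W = binomGap M n`, so that the claim is `∫ φ W ≥ 0` over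
`[a, b]`, where `a + b = n + 1`.

Pascal's rule makes `W` telescope, `W s = T (s - 1) - T s` with `T = binomGapTerm M n`, and
comparing `T` with its reflection `T (n - s)` gives `∫ W ≥ 0`. The absorption identities give
`M² (M - 1) (W s + W (n + 1 - s)) = C(M, s) C(M, n + 1 - s) Q(s)` with `Q` a concave quadratic
symmetric about `c = (n + 1) / 2`, so the symmetrised kernel is nonnegative near `c` and nonpositive
away from it. Log-concavity makes `φ` symmetric about `c` and decreasing in `|s - c|`. With `θ` the
value of `φ` where `Q` changes sign, `(φ - θ) (W + W ∘ reflect) ≥ 0` pointwise, hence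
`2 ∫ φ W = ∫ φ (W + W ∘ reflect) ≥ θ ∫ (W + W ∘ reflect) = 2 θ ∫ W ≥ 0`.
-/

open Real MeasureTheory Set

namespace Real

theorem inv_Gamma_eq_mul_inv_Gamma_add_one (x : ℝ) : (Gamma x)⁻¹ = x * (Gamma (x + 1))⁻¹ := by
  rcases ne_or_eq x 0 with hx | rfl
  · rw [Gamma_add_one hx, mul_inv, mul_inv_cancel_left₀ hx]
  · rw [zero_add, Gamma_zero, inv_zero, zero_mul]

theorem continuous_inv_Gamma : Continuous fun x : ℝ => (Gamma x)⁻¹ := by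
  have h : (fun x : ℝ => (Gamma x)⁻¹) = fun x : ℝ => (Complex.Gamma x)⁻¹.re := by
    ext x
    rw [Complex.Gamma_ofReal, ← Complex.ofReal_inv, Complex.ofReal_re]
  rw [h]
  exact Complex.continuous_re.comp
    (Complex.differentiable_one_div_Gamma.continuous.comp Complex.continuous_ofReal)

theorem inv_Gamma_nonneg {x : ℝ} (hx : 0 ≤ x) : 0 ≤ (Gamma x)⁻¹ :=
  inv_nonneg.2 (Gamma_nonneg_of_nonneg hx)

theorem inv_Gamma_nonpos {x : ℝ} (h₁ : -1 ≤ x) (h₂ : x ≤ 0) : (Gamma x)⁻¹ ≤ 0 := by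
  rw [inv_Gamma_eq_mul_inv_Gamma_add_one]
  exact mul_nonpos_of_nonpos_of_nonneg h₂ (inv_Gamma_nonneg (by linarith))

end Real

section genBinom

variable {M : ℝ}

theorem genBinom_eq_mul_inv (M s : ℝ) :
    genBinom M s = Gamma (M + 1) * (Gamma (s + 1))⁻¹ * (Gamma (M - s + 1))⁻¹ := by
  rw [genBinom, div_eq_mul_inv, mul_inv, mul_assoc]

-- `1 / Γ` is entire, and Mathlib's junk value `Γ = 0` at the poles makes `(Γ x)⁻¹` agree with it.
@[fun_prop]
theorem continuous_genBinom (M : ℝ) : Continuous (genBinom M) := by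
  rw [funext (genBinom_eq_mul_inv M)]
  exact (continuous_const.mul (continuous_inv_Gamma.comp (by fun_prop))).mul
    (continuous_inv_Gamma.comp (by fun_prop))

theorem genBinom_nonneg (hM : -1 ≤ M) {s : ℝ} (hs : -1 ≤ s) (hsM : s ≤ M + 1) :
    0 ≤ genBinom M s := by
  rw [genBinom_eq_mul_inv]
  exact mul_nonneg (mul_nonneg (Gamma_nonneg_of_nonneg (by linarith))
    (inv_Gamma_nonneg (by linarith))) (inv_Gamma_nonneg (by linarith))

theorem genBinom_nonpos (hM : -1 ≤ M) {s : ℝ} (hs : -2 ≤ s) (hs' : s ≤ -1) :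
    genBinom M s ≤ 0 := by
  rw [genBinom_eq_mul_inv]
  exact mul_nonpos_of_nonpos_of_nonneg (mul_nonpos_of_nonneg_of_nonpos
    (Gamma_nonneg_of_nonneg (by linarith)) (inv_Gamma_nonpos (by linarith) (by linarith)))
    (inv_Gamma_nonneg (by linarith))

theorem mul_genBinom_sub_one (hM : M ≠ 0) (s : ℝ) :
    M * genBinom (M - 1) s = (M - s) * genBinom M s := by
  rw [genBinom_eq_mul_inv, genBinom_eq_mul_inv, sub_add_cancel, show M - 1 - s + 1 = M - s by ring,
    Gamma_add_one hM, inv_Gamma_eq_mul_inv_Gamma_add_one (M - s)]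
  ring

theorem mul_genBinom_sub_one_sub_one (hM : M ≠ 0) (s : ℝ) :
    M * genBinom (M - 1) (s - 1) = s * genBinom M s := by
  rw [genBinom_eq_mul_inv, genBinom_eq_mul_inv, sub_add_cancel, sub_add_cancel,
    show M - 1 - (s - 1) + 1 = M - s + 1 by ring, Gamma_add_one hM,
    inv_Gamma_eq_mul_inv_Gamma_add_one s]
  ring

theorem genBinom_sub_one_add_genBinom_sub_one (hM : M ≠ 0) (s : ℝ) :
    genBinom (M - 1) s + genBinom (M - 1) (s - 1) = genBinom M s :=
  mul_left_cancel₀ hM <| by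
    linear_combination mul_genBinom_sub_one hM s + mul_genBinom_sub_one_sub_one hM s

end genBinom

noncomputable def binomGap (M n s : ℝ) : ℝ :=
  genBinom M s * genBinom (M - 2) (n - s) - genBinom (M - 1) s * genBinom (M - 1) (n - s)

noncomputable def binomGapTerm (M n t : ℝ) : ℝ :=
  genBinom (M - 1) t * genBinom (M - 2) (n - 1 - t)

section binomGap

variable {M : ℝ}

@[fun_prop]
theorem continuous_binomGap (M n : ℝ) : Continuous (binomGap M n) := by
  unfold binomGap; fun_prop

@[fun_prop]
theorem continuous_binomGapTerm (M n : ℝ) : Continuous (binomGapTerm M n) := by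
  unfold binomGapTerm; fun_prop

theorem binomGap_eq_sub (hM₀ : M ≠ 0) (hM₁ : M ≠ 1) (n s : ℝ) :
    binomGap M n s = binomGapTerm M n (s - 1) - binomGapTerm M n s := by
  have h₁ := genBinom_sub_one_add_genBinom_sub_one (M := M - 1) (sub_ne_zero.2 hM₁) (n - s)
  rw [show M - 1 - 1 = M - 2 by ring, show n - s - 1 = n - 1 - s by ring] at h₁
  rw [binomGap, binomGapTerm, binomGapTerm, show n - 1 - (s - 1) = n - s by ring,
    ← genBinom_sub_one_add_genBinom_sub_one hM₀ s, ← h₁]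
  ring

theorem mul_sub_binomGapTerm_reflect (hM₁ : M ≠ 1) (n s : ℝ) :
    (M - 1) * (binomGapTerm M n s - binomGapTerm M n (n - s)) =
      genBinom (M - 1) s * genBinom (M - 1) (n - s) * (n - 2 * s) := by
  have h₁ := mul_genBinom_sub_one_sub_one (sub_ne_zero.2 hM₁) (n - s)
  have h₂ := mul_genBinom_sub_one_sub_one (sub_ne_zero.2 hM₁) s
  rw [show M - 1 - 1 = M - 2 by ring, show n - s - 1 = n - 1 - s by ring] at h₁
  rw [show M - 1 - 1 = M - 2 by ring] at h₂
  rw [binomGapTerm, binomGapTerm, show n - 1 - (n - s) = s - 1 by ring]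
  linear_combination genBinom (M - 1) s * h₁ - genBinom (M - 1) (n - s) * h₂

theorem mul_binomGap_add_binomGap_reflect (hM₀ : M ≠ 0) (hM₁ : M ≠ 1) (n s : ℝ) :
    M ^ 2 * (M - 1) * (binomGap M n s + binomGap M n (n + 1 - s)) =
      genBinom M s * genBinom M (n + 1 - s) *
        ((n + 1) * (2 * M - 1 - n) / 2 - (4 * M - 2) * (s - (n + 1) / 2) ^ 2) := by
  have hM₁' : M - 1 ≠ 0 := sub_ne_zero.2 hM₁
  have a₁ := mul_genBinom_sub_one hM₀ s
  have a₂ := mul_genBinom_sub_one hM₀ (n + 1 - s)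
  have b₁ := mul_genBinom_sub_one_sub_one hM₀ (n + 1 - s)
  have b₂ := mul_genBinom_sub_one_sub_one hM₀ s
  have d₁ := mul_genBinom_sub_one_sub_one hM₁' (n + 1 - s)
  have d₂ := mul_genBinom_sub_one_sub_one hM₁' s
  rw [show n + 1 - s - 1 = n - s by ring] at b₁ d₁
  rw [show M - 1 - 1 = M - 2 by ring] at d₁ d₂
  rw [binomGap, binomGap, show n - (n + 1 - s) = s - 1 by ring]
  set k := n + 1 - s
  -- express both `binomGap` terms through `C(M, s)` and `C(M, k)` alone
  linear_combination M ^ 2 * genBinom M s * d₁ + M * genBinom M s * k * a₂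
    - (M - 1) * (M * genBinom (M - 1) (n - s) * a₁ + (M - s) * genBinom M s * b₁)
    + M ^ 2 * genBinom M k * d₂ + M * genBinom M k * s * a₁
    - (M - 1) * (M * genBinom (M - 1) (s - 1) * a₂ + (M - k) * genBinom M k * b₂)

end binomGap

theorem intervalIntegral.integral_comp_sub_right_sub {g : ℝ → ℝ} (hg : Continuous g) (a b h : ℝ) :
    ∫ s in a..b, (g (s - h) - g s) = (∫ s in (a - h)..a, g s) - ∫ s in (b - h)..b, g s := by
  have hi : ∀ u v, IntervalIntegrable g volume u v := hg.intervalIntegrable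
  have hi' : IntervalIntegrable (fun s => g (s - h)) volume a b :=
    (hg.comp (continuous_sub_right h)).intervalIntegrable _ _
  rw [integral_sub hi' (hi a b),
    integral_comp_sub_right, ← integral_add_adjacent_intervals (hi (a - h) a) (hi a (b - h)),
    ← integral_add_adjacent_intervals (hi a (b - h)) (hi (b - h) b)]
  ring

theorem max_zero_sub_add_min (M x : ℝ) : max 0 (x - M) + min M x = x := by
  rcases le_total x M with h | h
  · rw [max_eq_left (by linarith), min_eq_right h, zero_add]
  · rw [max_eq_right (by linarith), min_eq_left h, sub_add_cancel]

theorem max_zero_sub_le_min {M x : ℝ} (hx : 0 ≤ x) (hxM : x ≤ 2 * M) :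
    max 0 (x - M) ≤ min M x :=
  le_min (max_le (by linarith) (by linarith)) (max_le hx (by linarith))

section binomGapIntegral

open intervalIntegral

variable {M n : ℝ}

theorem integral_binomGap_eq (hM : 1 < M) (a b : ℝ) :
    ∫ s in a..b, binomGap M n s =
      (∫ s in (a - 1)..a, binomGapTerm M n s) - ∫ s in (b - 1)..b, binomGapTerm M n s := by
  rw [← integral_comp_sub_right_sub (continuous_binomGapTerm M n)]
  exact integral_congr fun s _ => binomGap_eq_sub (by linarith) hM.ne' n s

theorem integral_binomGap_nonneg_of_neg (hM : 1 < M) (hn : -1 < n) (hn₀ : n < 0) :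
    0 ≤ ∫ s in (0 : ℝ)..n + 1, binomGap M n s := by
  have hi : ∀ u v, IntervalIntegrable (binomGapTerm M n) volume u v :=
    (continuous_binomGapTerm M n).intervalIntegrable
  rw [integral_binomGap_eq hM, add_sub_cancel_right,
    ← integral_add_adjacent_intervals (hi (0 - 1) n) (hi n 0),
    ← integral_add_adjacent_intervals (hi n 0) (hi 0 (n + 1))]
  have h₁ : 0 ≤ ∫ s in (0 - 1)..n, binomGapTerm M n s :=
    integral_nonneg (by linarith) fun t ht => mul_nonneg
      (genBinom_nonneg (by linarith) (by linarith [ht.1]) (by linarith [ht.2]))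
      (genBinom_nonneg (by linarith) (by linarith [ht.2]) (by linarith [ht.1]))
  have h₂ : ∫ s in (0 : ℝ)..n + 1, binomGapTerm M n s ≤ ∫ s in (0 : ℝ)..n + 1, (0 : ℝ) :=
    integral_mono_on (by linarith) (hi _ _) intervalIntegrable_const fun t ht =>
      mul_nonpos_of_nonneg_of_nonpos
        (genBinom_nonneg (by linarith) (by linarith [ht.1]) (by linarith [ht.2]))
        (genBinom_nonpos (by linarith) (by linarith [ht.2]) (by linarith [ht.1]))
  rw [intervalIntegral.integral_zero] at h₂
  linarith

theorem integral_binomGap_nonneg_of_add_eq {a b : ℝ} (hM : 1 < M) (hab : a + b = n + 1)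
    (ha : 0 ≤ a) (ha' : a ≤ n / 2) (hb : b ≤ M) : 0 ≤ ∫ s in a..b, binomGap M n s := by
  have hi : ∀ u v, IntervalIntegrable (binomGapTerm M n) volume u v :=
    (continuous_binomGapTerm M n).intervalIntegrable
  have hreflect : ∫ s in (b - 1)..b, binomGapTerm M n s =
      ∫ s in (a - 1)..a, binomGapTerm M n (n - s) := by
    rw [integral_comp_sub_left, show n - a = b - 1 by linarith, show n - (a - 1) = b by linarith]
  have hi' : IntervalIntegrable (fun s => binomGapTerm M n (n - s)) volume (a - 1) a :=
    ((continuous_binomGapTerm M n).comp (continuous_sub_left n)).intervalIntegrable _ _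
  rw [integral_binomGap_eq hM, hreflect, ← intervalIntegral.integral_sub (hi _ _) hi']
  refine integral_nonneg (by linarith) fun s hs => nonneg_of_mul_nonneg_right ?_ (sub_pos.2 hM)
  rw [mul_sub_binomGapTerm_reflect hM.ne' n s]
  exact mul_nonneg (mul_nonneg
    (genBinom_nonneg (by linarith) (by linarith [hs.1]) (by linarith [hs.2]))
    (genBinom_nonneg (by linarith) (by linarith [hs.2]) (by linarith [hs.1])))
    (by linarith [hs.2])

theorem integral_binomGap_nonneg (hM : 1 < M) (hn : 0 < n + 1) (hn' : n < 2 * M - 2) :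
    0 ≤ ∫ s in max 0 (n + 1 - M)..min M (n + 1), binomGap M n s := by
  rcases lt_or_ge n 0 with hn₀ | hn₀
  · rw [max_eq_left (by linarith), min_eq_right (by linarith)]
    exact integral_binomGap_nonneg_of_neg hM (by linarith) hn₀
  · exact integral_binomGap_nonneg_of_add_eq hM (max_zero_sub_add_min M (n + 1))
      (le_max_left _ _) (max_le (by linarith) (by linarith)) (min_le_left _ _)

end binomGapIntegral

section binomGapReflect

variable {M n s : ℝ}

theorem binomGap_add_binomGap_reflect_nonneg (hM : 1 < M) (hs : s ∈ Icc 0 M)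
    (hs' : n + 1 - s ∈ Icc 0 M)
    (h : (s - (n + 1) / 2) ^ 2 ≤ (n + 1) * (2 * M - 1 - n) / (4 * (2 * M - 1))) :
    0 ≤ binomGap M n s + binomGap M n (n + 1 - s) := by
  have hM' : 0 < M ^ 2 * (M - 1) := mul_pos (by positivity) (sub_pos.2 hM)
  refine nonneg_of_mul_nonneg_right ?_ hM'
  rw [mul_binomGap_add_binomGap_reflect (by positivity) hM.ne']
  rw [le_div_iff₀ (by linarith)] at h
  exact mul_nonneg (mul_nonneg
    (genBinom_nonneg (by linarith) (by linarith [hs.1]) (by linarith [hs.2]))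
    (genBinom_nonneg (by linarith) (by linarith [hs'.1]) (by linarith [hs'.2]))) (by linarith)

theorem binomGap_add_binomGap_reflect_nonpos (hM : 1 < M) (hs : s ∈ Icc 0 M)
    (hs' : n + 1 - s ∈ Icc 0 M)
    (h : (n + 1) * (2 * M - 1 - n) / (4 * (2 * M - 1)) ≤ (s - (n + 1) / 2) ^ 2) :
    binomGap M n s + binomGap M n (n + 1 - s) ≤ 0 := by
  have hM' : 0 < M ^ 2 * (M - 1) := mul_pos (by positivity) (sub_pos.2 hM)
  refine nonpos_of_mul_nonpos_right ?_ hM'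
  rw [mul_binomGap_add_binomGap_reflect (by positivity) hM.ne']
  rw [div_le_iff₀ (by linarith)] at h
  exact mul_nonpos_of_nonneg_of_nonpos (mul_nonneg
    (genBinom_nonneg (by linarith) (by linarith [hs.1]) (by linarith [hs.2]))
    (genBinom_nonneg (by linarith) (by linarith [hs'.1]) (by linarith [hs'.2]))) (by linarith)

end binomGapReflect

def IsSymmDecreasingAbout (c : ℝ) (φ : ℝ → ℝ) : Prop :=
  ∀ s t, |s - c| ≤ |t - c| → φ t ≤ φ s

namespace IsSymmDecreasingAbout

variable {c : ℝ} {φ : ℝ → ℝ}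

theorem reflect (h : IsSymmDecreasingAbout c φ) (s : ℝ) : φ (2 * c - s) = φ s := by
  have habs : |2 * c - s - c| = |s - c| := by rw [show 2 * c - s - c = -(s - c) by ring, abs_neg]
  exact le_antisymm (h _ _ habs.ge) (h _ _ habs.le)

theorem monotoneOn (h : IsSymmDecreasingAbout c φ) : MonotoneOn φ (Iic c) :=
  fun s hs t ht hst => h t s <| by
    rw [abs_of_nonpos (sub_nonpos.2 (mem_Iic.1 hs)), abs_of_nonpos (sub_nonpos.2 (mem_Iic.1 ht))]
    linarith

theorem antitoneOn (h : IsSymmDecreasingAbout c φ) : AntitoneOn φ (Ici c) :=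
  fun s hs t ht hst => h s t <| by
    rw [abs_of_nonneg (sub_nonneg.2 (mem_Ici.1 hs)), abs_of_nonneg (sub_nonneg.2 (mem_Ici.1 ht))]
    linarith

theorem intervalIntegrable (h : IsSymmDecreasingAbout c φ) (a b : ℝ) :
    IntervalIntegrable φ volume a b := by
  have hc : ∀ x, IntervalIntegrable φ volume x c := by
    intro x
    rcases le_total x c with hx | hx
    · exact (h.monotoneOn.mono (uIcc_of_le hx ▸ Icc_subset_Iic_self)).intervalIntegrable
    · exact (h.antitoneOn.mono (uIcc_of_ge hx ▸ Icc_subset_Ici_self)).intervalIntegrable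
  exact (hc a).trans (hc b).symm

end IsSymmDecreasingAbout

namespace IsLogConcaveOn

variable {S : Set ℝ} {f : ℝ → ℝ}

theorem mul_le_sq (hf : IsLogConcaveOn S f) (hf₀ : ∀ x, 0 ≤ f x) {x y : ℝ} (hx : x ∈ S)
    (hy : y ∈ S) : f x * f y ≤ f ((x + y) / 2) ^ 2 := by
  have h := hf x hx y hy (1 / 2) (by norm_num) (by norm_num)
  rw [show (1 : ℝ) - 1 / 2 = 1 / 2 by norm_num, show 1 / 2 * x + 1 / 2 * y = (x + y) / 2 by ring,
    ← sqrt_eq_rpow, ← sqrt_eq_rpow] at h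
  calc f x * f y = (√(f x) * √(f y)) ^ 2 := by rw [mul_pow, sq_sqrt (hf₀ x), sq_sqrt (hf₀ y)]
    _ ≤ f ((x + y) / 2) ^ 2 := pow_le_pow_left₀ (by positivity) h 2

theorem mul_add_sub_le_mul_add_sub_of_lt (hf : IsLogConcaveOn S f) (hf₀ : ∀ x, 0 ≤ f x)
    {c x y : ℝ} (hc : c ∈ S) (hcy : c + y ∈ S) (hcy' : c - y ∈ S)
    (hP : 0 < f (c + y) * f (c - y)) (hx : 0 < x) (hxy : x < y) :
    f (c + y) * f (c - y) ≤ f (c + x) * f (c - x) := by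
  set P := f (c + y) * f (c - y)
  have hmid : P ≤ f c * f c := by
    simpa [← sq, show c + y + (c - y) = 2 * c by ring] using hf.mul_le_sq hf₀ hcy hcy'
  have hy : 0 < y := hx.trans hxy
  -- `c ± x = l * c + (1 - l) * (c ± y)`
  set l := 1 - x / y
  have hl₀ : 0 < l := sub_pos.2 ((div_lt_one hy).2 hxy)
  have hl₁ : l < 1 := by simp only [l]; linarith [div_pos hx hy]
  have h₁ := hf c hc (c + y) hcy l hl₀ hl₁
  have h₂ := hf c hc (c - y) hcy' l hl₀ hl₁
  rw [show l * c + (1 - l) * (c + y) = c + x by simp only [l]; field_simp; ring] at h₁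
  rw [show l * c + (1 - l) * (c - y) = c - x by simp only [l]; field_simp; ring] at h₂
  calc P = P ^ l * P ^ (1 - l) := by rw [← rpow_add hP, add_sub_cancel, rpow_one]
    _ ≤ (f c * f c) ^ l * P ^ (1 - l) := by gcongr
    _ = (f c ^ l * f (c + y) ^ (1 - l)) * (f c ^ l * f (c - y) ^ (1 - l)) := by
      rw [mul_rpow (hf₀ c) (hf₀ c), mul_rpow (hf₀ _) (hf₀ _)]; ring
    _ ≤ f (c + x) * f (c - x) := mul_le_mul h₁ h₂
      (mul_nonneg (rpow_nonneg (hf₀ _) _) (rpow_nonneg (hf₀ _) _)) (hf₀ _)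

theorem antitoneOn_mul_add_sub (hS : S.OrdConnected) (hf : IsLogConcaveOn S f)
    (hf₀ : ∀ x, 0 ≤ f x) (hz : ∀ x ∉ S, f x = 0) (c : ℝ) :
    AntitoneOn (fun x => f (c + x) * f (c - x)) (Ici 0) := by
  intro x hx y hy hxy
  rcases (mul_nonneg (hf₀ (c + y)) (hf₀ (c - y))).eq_or_lt with hP | hP
  · exact hP.symm.le.trans (mul_nonneg (hf₀ _) (hf₀ _))
  have mem : ∀ z, f z ≠ 0 → z ∈ S := fun z hz' => of_not_not fun h => hz' (hz z h)
  have hcy : c + y ∈ S := mem _ fun h => by simp [h] at hP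
  have hcy' : c - y ∈ S := mem _ fun h => by simp [h] at hP
  have hc : c ∈ S := hS.out hcy' hcy ⟨by linarith [mem_Ici.1 hy], by linarith [mem_Ici.1 hy]⟩
  rcases (mem_Ici.1 hx).eq_or_lt with rfl | hx'
  · simpa [← sq, show c + y + (c - y) = 2 * c by ring] using hf.mul_le_sq hf₀ hcy hcy'
  rcases hxy.eq_or_lt with rfl | hxy'
  · exact le_rfl
  exact hf.mul_add_sub_le_mul_add_sub_of_lt hf₀ hc hcy hcy' hP hx' hxy'

theorem isSymmDecreasingAbout_mul_reflect (hS : S.OrdConnected) (hf : IsLogConcaveOn S f)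
    (hf₀ : ∀ x, 0 ≤ f x) (hz : ∀ x ∉ S, f x = 0) (c : ℝ) :
    IsSymmDecreasingAbout c fun s => f s * f (2 * c - s) := by
  have hcentered : ∀ s, f s * f (2 * c - s) = f (c + |s - c|) * f (c - |s - c|) := by
    intro s
    rcases abs_cases (s - c) with ⟨h, _⟩ | ⟨h, _⟩ <;> rw [h]
    · rw [show c + (s - c) = s by ring, show c - (s - c) = 2 * c - s by ring]
    · rw [show c + -(s - c) = 2 * c - s by ring, show c - -(s - c) = s by ring, mul_comm]
  intro s t hst
  simp only [hcentered]
  exact hf.antitoneOn_mul_add_sub hS hf₀ hz c (mem_Ici.2 (abs_nonneg _))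
    (mem_Ici.2 (abs_nonneg _)) hst

end IsLogConcaveOn

section SymmetricWeight

open intervalIntegral

variable {a b c : ℝ} {φ W : ℝ → ℝ}

theorem two_mul_integral_mul_eq_integral_mul_add_reflect (hc : a + b = 2 * c)
    (hφ : ∀ s, φ (2 * c - s) = φ s) (hi : IntervalIntegrable (fun s => φ s * W s) volume a b) :
    2 * ∫ s in a..b, φ s * W s = ∫ s in a..b, φ s * (W s + W (2 * c - s)) := by
  have hreflect : ∫ s in a..b, φ s * W (2 * c - s) = ∫ s in a..b, φ s * W s := by
    calc ∫ s in a..b, φ s * W (2 * c - s) = ∫ s in a..b, φ (2 * c - s) * W (2 * c - s) := by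
          simp_rw [hφ]
      _ = ∫ s in a..b, φ s * W s := by
          rw [integral_comp_sub_left (fun s => φ s * W s), show 2 * c - b = a by linarith,
            show 2 * c - a = b by linarith]
  have hi' : IntervalIntegrable (fun s => φ s * W (2 * c - s)) volume a b := by
    have h := hi.comp_sub_left (2 * c)
    rw [show 2 * c - a = b by linarith, show 2 * c - b = a by linarith] at h
    simpa only [hφ] using h.symm
  simp_rw [mul_add]
  rw [integral_add hi hi', hreflect]
  ring

theorem integral_mul_nonneg_of_sub_mul_nonneg {V : ℝ → ℝ} {θ : ℝ} (hab : a ≤ b) (hθ : 0 ≤ θ)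
    (hφV : IntervalIntegrable (fun s => φ s * V s) volume a b)
    (hV : IntervalIntegrable V volume a b) (hV₀ : 0 ≤ ∫ s in a..b, V s)
    (h : ∀ s ∈ Icc a b, 0 ≤ (φ s - θ) * V s) : 0 ≤ ∫ s in a..b, φ s * V s := by
  have hsplit : ∫ s in a..b, (φ s - θ) * V s =
      (∫ s in a..b, φ s * V s) - θ * ∫ s in a..b, V s := by
    simp_rw [sub_mul]
    rw [integral_sub hφV (hV.const_mul θ), intervalIntegral.integral_const_mul]
  linarith [intervalIntegral.integral_nonneg (μ := volume) hab h, mul_nonneg hθ hV₀]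

theorem integral_mul_nonneg_of_isSymmDecreasingAbout {r : ℝ} (hab : a ≤ b) (hc : a + b = 2 * c)
    (hφ : IsSymmDecreasingAbout c φ) (hφ₀ : ∀ s, 0 ≤ φ s) (hW : Continuous W)
    (hW₀ : 0 ≤ ∫ s in a..b, W s)
    (hin : ∀ s ∈ Icc a b, (s - c) ^ 2 ≤ r → 0 ≤ W s + W (2 * c - s))
    (hout : ∀ s ∈ Icc a b, r ≤ (s - c) ^ 2 → W s + W (2 * c - s) ≤ 0) :
    0 ≤ ∫ s in a..b, φ s * W s := by
  have hV : Continuous fun s => W s + W (2 * c - s) := by fun_prop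
  have hφW := (hφ.intervalIntegrable a b).mul_continuousOn hW.continuousOn
  have hφV := (hφ.intervalIntegrable a b).mul_continuousOn hV.continuousOn
  have hweighted := two_mul_integral_mul_eq_integral_mul_add_reflect hc hφ.reflect hφW
  have hplain := two_mul_integral_mul_eq_integral_mul_add_reflect (φ := fun _ => 1) hc
    (fun _ => rfl) (by simpa only [one_mul] using hW.intervalIntegrable a b)
  simp only [one_mul] at hplain
  have hcr : |c + √r - c| = √r := by rw [add_sub_cancel_left, abs_of_nonneg (sqrt_nonneg r)]
  have hcross : ∀ s ∈ Icc a b, 0 ≤ (φ s - φ (c + √r)) * (W s + W (2 * c - s)) := by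
    intro s hs
    rcases le_total ((s - c) ^ 2) r with h | h
    · exact mul_nonneg (sub_nonneg.2 (hφ _ _ (by rw [hcr]; exact abs_le_sqrt h))) (hin s hs h)
    · refine mul_nonneg_of_nonpos_of_nonpos (sub_nonpos.2 (hφ _ _ ?_)) (hout s hs h)
      rw [hcr, ← sqrt_sq_eq_abs]
      exact sqrt_le_sqrt h
  have := integral_mul_nonneg_of_sub_mul_nonneg hab (hφ₀ (c + √r)) hφV
    (hV.intervalIntegrable a b) (by linarith) hcross
  linarith

end SymmetricWeight

theorem setOf_nonneg_le_and_nonneg_sub_le_eq_Icc (M x : ℝ) :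
    {s : ℝ | 0 ≤ s ∧ s ≤ M ∧ 0 ≤ x - s ∧ x - s ≤ M} = Icc (max 0 (x - M)) (min M x) := by
  ext s
  simp only [mem_ofPred_eq, mem_Icc, max_le_iff, le_min_iff]
  constructor
  · rintro ⟨h₁, h₂, h₃, h₄⟩
    exact ⟨⟨h₁, by linarith⟩, h₂, by linarith⟩
  · rintro ⟨⟨h₁, h₂⟩, h₃, h₄⟩
    exact ⟨h₁, h₃, by linarith, by linarith⟩

theorem integral_mul_binomGap_nonneg {M n : ℝ} {φ : ℝ → ℝ} (hM : 1 < M) (hn : 0 < n + 1)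
    (hn' : n < 2 * M - 2) (hφ : IsSymmDecreasingAbout ((n + 1) / 2) φ) (hφ₀ : ∀ s, 0 ≤ φ s) :
    0 ≤ ∫ s in max 0 (n + 1 - M)..min M (n + 1), φ s * binomGap M n s := by
  have hreflect : ∀ s, 2 * ((n + 1) / 2) - s = n + 1 - s := fun s => by ring
  have hdom : ∀ s ∈ Icc (max 0 (n + 1 - M)) (min M (n + 1)),
      s ∈ Icc 0 M ∧ n + 1 - s ∈ Icc 0 M := by
    intro s hs
    rw [← setOf_nonneg_le_and_nonneg_sub_le_eq_Icc] at hs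
    exact ⟨⟨hs.1, hs.2.1⟩, hs.2.2⟩
  refine integral_mul_nonneg_of_isSymmDecreasingAbout
    (r := (n + 1) * (2 * M - 1 - n) / (4 * (2 * M - 1))) (max_zero_sub_le_min hn.le (by linarith))
    (by linarith [max_zero_sub_add_min M (n + 1)]) hφ hφ₀ (continuous_binomGap M n)
    (integral_binomGap_nonneg hM hn hn') (fun s hs h => ?_) (fun s hs h => ?_) <;>
    rw [hreflect]
  · exact binomGap_add_binomGap_reflect_nonneg hM (hdom s hs).1 (hdom s hs).2 h
  · exact binomGap_add_binomGap_reflect_nonpos hM (hdom s hs).1 (hdom s hs).2 h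

theorem mixture_integral_ineq_two_general
    (M : ℝ) (hM : 1 < M) (α : ℝ → ℝ)
    (hα_nonneg : ∀ s, 0 ≤ α s)
    (hα_logconcave : IsLogConcaveOn (Set.Ioo (0 : ℝ) M) α)
    (hα_zero : ∀ s, s ∉ Set.Ioo (0 : ℝ) M → α s = 0)
    (n : ℝ) (hn₂ : n < 2 * M - 2) :
    (∫ s in {s : ℝ | 0 ≤ s ∧ s ≤ M ∧ 0 ≤ n + 1 - s ∧ n + 1 - s ≤ M},
        α s * α (n - s + 1) * genBinom (M - 1) s * genBinom (M - 1) (n - s)) ≤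
      ∫ s in {s : ℝ | 0 ≤ s ∧ s ≤ M ∧ 0 ≤ n + 1 - s ∧ n + 1 - s ≤ M},
        α s * α (n - s + 1) * genBinom M s * genBinom (M - 2) (n - s) := by
  rw [setOf_nonneg_le_and_nonneg_sub_le_eq_Icc]
  rcases le_or_gt (n + 1) 0 with hn | hn
  · have hvol : volume (Icc (max 0 (n + 1 - M)) (min M (n + 1))) = 0 := by
      rw [Real.volume_Icc, ENNReal.ofReal_eq_zero]
      linarith [le_max_left 0 (n + 1 - M), min_le_right M (n + 1)]
    simp [Measure.restrict_eq_zero.2 hvol]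
  have hφ : IsSymmDecreasingAbout ((n + 1) / 2) fun s => α s * α (n - s + 1) := by
    simpa only [show ∀ s, 2 * ((n + 1) / 2) - s = n - s + 1 from fun s => by ring] using
      hα_logconcave.isSymmDecreasingAbout_mul_reflect ordConnected_Ioo hα_nonneg hα_zero
        ((n + 1) / 2)
  have hi : ∀ {F G : ℝ → ℝ}, Continuous F → Continuous G → IntervalIntegrable
      (fun s => α s * α (n - s + 1) * F s * G s) volume (max 0 (n + 1 - M)) (min M (n + 1)) :=
    fun hF hG => ((hφ.intervalIntegrable _ _).mul_continuousOn hF.continuousOn).mul_continuousOn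
      hG.continuousOn
  have hab := max_zero_sub_le_min hn.le (by linarith : n + 1 ≤ 2 * M)
  rw [integral_Icc_eq_integral_Ioc, integral_Icc_eq_integral_Ioc,
    ← intervalIntegral.integral_of_le hab, ← intervalIntegral.integral_of_le hab, ← sub_nonneg,
    ← intervalIntegral.integral_sub (hi (by fun_prop) (by fun_prop))
      (hi (by fun_prop) (by fun_prop))]
  refine (integral_mul_binomGap_nonneg hM hn hn₂ hφ fun s => mul_nonneg (hα_nonneg _)
    (hα_nonneg _)).trans_eq (intervalIntegral.integral_congr fun s _ => ?_)
  simp only [binomGap]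
  ring

theorem mixture_integral_ineq_two
    (M : ℝ) (hM : 1 < M) (α : ℝ → ℝ)
    (hα_nonneg : ∀ s, 0 ≤ α s)
    (hα_cont : ContinuousOn α (Set.Ioo (0 : ℝ) M))
    (hα_logconcave : IsLogConcaveOn (Set.Ioo (0 : ℝ) M) α)
    (hα_zero : ∀ s, s ∉ Set.Ioo (0 : ℝ) M → α s = 0)
    (n : ℝ) (hn₁ : -2 < n) (hn₂ : n < 2 * M - 2) :
    (∫ s in {s : ℝ | 0 ≤ s ∧ s ≤ M ∧ 0 ≤ n + 1 - s ∧ n + 1 - s ≤ M},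
        α s * α (n - s + 1) * genBinom (M - 1) s * genBinom (M - 1) (n - s)) ≤
      ∫ s in {s : ℝ | 0 ≤ s ∧ s ≤ M ∧ 0 ≤ n + 1 - s ∧ n + 1 - s ≤ M},
        α s * α (n - s + 1) * genBinom M s * genBinom (M - 2) (n - s) :=
  mixture_integral_ineq_two_general M hM α hα_nonneg hα_logconcave hα_zero n hn₂
end

section
/- Let M be a positive integer and let α₀, α₁, …, α_M be a log-concave sequence of nonnegative reals, extended by αᵢ = 0 for i < 0 or i > M. Then for every integer n with 0 ≤ n ≤ 2M - 2, Σ_{i+j=n} (αᵢ - α_{i+1})·(αⱼ - α_{j+1})·(M-1 choose i)·(M-1 choose j) ≥ Σ_{i+j=n} αᵢ·(αⱼ - 2α_{j+1} + α_{j+2})·(M choose i)·(M-2 choose j), where the sums range over integer pairs (i, j) with i + j = n and the convention (M choose i) = 0 for i < 0 or i > M is used. -/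
open Finset LaurentPolynomial AddMonoidAlgebra

theorem Nat.choose_mul_choose_succ_le {n a b : ℕ} (hab : a ≤ b) :
    n.choose a * n.choose (b + 1) ≤ n.choose (a + 1) * n.choose b := by
  refine Nat.le_of_mul_le_mul_right (c := (a + 1) * (b + 1)) ?_ (by positivity)
  have hmono : (a + 1) * (n - b) ≤ (n - a) * (b + 1) := by
    rw [mul_comm (n - a)]
    exact Nat.mul_le_mul (by omega) (by omega)
  calc n.choose a * n.choose (b + 1) * ((a + 1) * (b + 1))
      = n.choose a * (a + 1) * (n.choose (b + 1) * (b + 1)) := by ring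
    _ = n.choose a * n.choose b * ((a + 1) * (n - b)) := by rw [Nat.choose_succ_right_eq]; ring
    _ ≤ n.choose a * n.choose b * ((n - a) * (b + 1)) := Nat.mul_le_mul_left _ hmono
    _ = n.choose a * (n - a) * n.choose b * (b + 1) := by ring
    _ = n.choose (a + 1) * n.choose b * ((a + 1) * (b + 1)) := by
        rw [← Nat.choose_succ_right_eq]; ring

lemma binomZ_of_neg {m k : ℤ} (hk : k < 0) : binomZ m k = 0 :=
  if_neg (by omega)

lemma binomZ_of_lt {m k : ℤ} (hk : m < k) : binomZ m k = 0 :=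
  if_neg (by omega)

lemma binomZ_natCast_s17 (m k : ℕ) : binomZ m k = m.choose k := by
  unfold binomZ
  split_ifs with h
  · simp
  · rw [Nat.choose_eq_zero_of_lt (by omega)]

lemma binomZ_add_one {m : ℤ} (hm : 0 ≤ m) (k : ℤ) :
    binomZ (m + 1) k = binomZ m k + binomZ m (k - 1) := by
  lift m to ℕ using hm
  rcases lt_or_ge k 0 with hk | hk
  · simp [binomZ_of_neg hk, binomZ_of_neg (show k - 1 < 0 by omega)]
  lift k to ℕ using hk
  rcases k with _ | k
  · simp [binomZ]
    positivity
  · have := Nat.choose_succ_succ' m k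
    simp only [← binomZ_natCast_s17] at this
    push_cast at this ⊢
    rw [add_sub_cancel_right, this, add_comm]

def IsLogConcaveSeq (f : ℤ → ℝ) : Prop :=
  ∀ x y : ℤ, x ≤ y → f (x - 1) * f (y + 1) ≤ f x * f y

namespace IsLogConcaveSeq

variable {f g : ℤ → ℝ}

lemma of_eq_zero_outside {M : ℤ} (h0 : ∀ i, 0 ≤ f i) (hz : ∀ i, i < 0 ∨ M < i → f i = 0)
    (hf : ∀ i j, 1 ≤ i → i ≤ j → j + 1 ≤ M → f (i - 1) * f (j + 1) ≤ f i * f j) :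
    IsLogConcaveSeq f := by
  intro x y hxy
  by_cases hx : 1 ≤ x
  · by_cases hy : y + 1 ≤ M
    · exact hf x y hx hxy hy
    · rw [hz (y + 1) (.inr (by omega)), mul_zero]
      exact mul_nonneg (h0 x) (h0 y)
  · rw [hz (x - 1) (.inl (by omega)), zero_mul]
    exact mul_nonneg (h0 x) (h0 y)

lemma comp_add_const (hf : IsLogConcaveSeq f) (c : ℤ) : IsLogConcaveSeq fun i ↦ f (i + c) := by
  intro x y hxy
  simpa only [sub_add_eq_add_sub, add_right_comm] using hf (x + c) (y + c) (by omega)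

/-- Both factors have the sign of `v - u`, except at `u = v + 1`, where both vanish. -/
lemma sub_mul_sub_nonneg (hf : IsLogConcaveSeq f) (hg : IsLogConcaveSeq g) (u v : ℤ) :
    0 ≤ (f u * f v - f (u - 1) * f (v + 1)) * (g u * g v - g (u - 1) * g (v + 1)) := by
  rcases le_or_gt u v with huv | hvu
  · exact mul_nonneg (sub_nonneg.2 (hf u v huv)) (sub_nonneg.2 (hg u v huv))
  rcases (Int.add_one_le_of_lt hvu).eq_or_lt with rfl | hvu
  · simp [mul_comm]
  · have hf' := hf (v + 1) (u - 1) (by omega)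
    have hg' := hg (v + 1) (u - 1) (by omega)
    simp only [add_sub_cancel_right, sub_add_cancel] at hf' hg'
    exact mul_nonneg_of_nonpos_of_nonpos (by linarith [mul_comm (f u) (f v)])
      (by linarith [mul_comm (g u) (g v)])

/-- The terms `i` and `k - 1 - i` add up to an instance of `sub_mul_sub_nonneg`. -/
lemma sum_Icc_mul_sub_mul_nonneg (hf : IsLogConcaveSeq f) (hg : IsLogConcaveSeq g) (k : ℤ) :
    0 ≤ ∑ i ∈ Icc (-1) k,
      f i * f (k - i) * (g (i + 1) * g (k - i + 1) - g (i + 2) * g (k - i)) := by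
  set t : ℤ → ℝ := fun i ↦ f i * f (k - i) * (g (i + 1) * g (k - i + 1) - g (i + 2) * g (k - i))
  have hreflect : ∑ i ∈ Icc (-1) k, t (k - 1 - i) = ∑ i ∈ Icc (-1) k, t i :=
    sum_nbij' (k - 1 - ·) (k - 1 - ·) (by intro i; simp; omega) (by intro i; simp; omega)
      (by intro i _; ring) (by intro i _; ring) (fun _ _ ↦ rfl)
  have hpair : ∀ i, 0 ≤ t i + t (k - 1 - i) := by
    intro i
    have := sub_mul_sub_nonneg hf (hg.comp_add_const 1) (k - i) i
    simp only [t, show k - (k - 1 - i) = i + 1 by ring, show k - 1 - i + 1 = k - i by ring,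
      show k - 1 - i + 2 = k - i + 1 by ring, show i + 1 + 1 = i + 2 by ring,
      show k - i - 1 = k - 1 - i by ring] at this ⊢
    linear_combination this
  have := sum_nonneg fun i (_ : i ∈ Icc (-1) k) ↦ hpair i
  rw [sum_add_distrib, hreflect] at this
  linarith

end IsLogConcaveSeq

lemma isLogConcaveSeq_binomZ (m : ℤ) : IsLogConcaveSeq fun k ↦ (binomZ m k : ℝ) := by
  refine .of_eq_zero_outside (M := m) (fun _ ↦ Nat.cast_nonneg _) (fun i hi ↦ ?_)
    fun i j hi hij hj ↦ ?_
  · rcases hi with hi | hi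
    · rw [binomZ_of_neg hi, Nat.cast_zero]
    · rw [binomZ_of_lt hi, Nat.cast_zero]
  lift m to ℕ using by omega
  lift j to ℕ using by omega
  obtain ⟨k, rfl⟩ : ∃ k : ℕ, i = k + 1 := ⟨(i - 1).toNat, by omega⟩
  have := Nat.choose_mul_choose_succ_le (n := m) (show k ≤ j by omega)
  simp only [← binomZ_natCast_s17] at this
  rw [add_sub_cancel_right]
  exact_mod_cast this

namespace LaurentPolynomial

variable {R : Type*}

lemma coeff_T_mul [Semiring R] (n : ℤ) (x : R[T;T⁻¹]) (i : ℤ) :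
    (T n * x).coeff i = x.coeff (i - n) := by
  rw [T, coeff_single_mul_apply, one_mul, neg_add_eq_sub]

lemma coeff_mul_eq_sum_Icc [Semiring R] {x y : R[T;T⁻¹]} (hx : ∀ i < 0, x.coeff i = 0)
    (hy : ∀ i < 0, y.coeff i = 0) {l : ℤ} (hl : l ≤ 0) (n : ℤ) :
    (x * y).coeff n = ∑ i ∈ Icc l n, x.coeff i * y.coeff (n - i) := by
  have hout : ∀ i ∉ Icc l n, x.coeff i * y.coeff (n - i) = 0 := by
    intro i hi
    rcases not_and_or.1 (mem_Icc.not.1 hi) with hi | hi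
    · rw [hx i (by omega), zero_mul]
    · rw [hy (n - i) (by omega), mul_zero]
  calc (x * y).coeff n = ∑ i ∈ x.coeff.support, x.coeff i * y.coeff (n - i) := by
        simp only [coeff_mul_apply_left, Finsupp.sum, neg_add_eq_sub]
    _ = ∑ i ∈ x.coeff.support ∪ Icc l n, x.coeff i * y.coeff (n - i) :=
        sum_subset subset_union_left fun i _ hi ↦ by
          rw [Finsupp.notMem_support_iff.1 hi, zero_mul]
    _ = ∑ i ∈ Icc l n, x.coeff i * y.coeff (n - i) :=
        (sum_subset subset_union_right fun i _ hi ↦ hout i hi).symm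

lemma coeff_one_add_T_sq_mul_nonneg [CommSemiring R] [PartialOrder R] [IsOrderedRing R]
    {x : R[T;T⁻¹]} (hx : ∀ i, 0 ≤ x.coeff i) (n : ℤ) : 0 ≤ ((1 + T 1) ^ 2 * x).coeff n := by
  rw [show (1 + T 1) ^ 2 * x = x + T 1 * x + T 1 * x + T 1 * (T 1 * x) by ring]
  simp only [coeff_add, Finsupp.add_apply, coeff_T_mul]
  have := hx n
  have := hx (n - 1)
  have := hx (n - 1 - 1)
  positivity

end LaurentPolynomial

noncomputable def binomWeighted (m : ℤ) (a : ℤ → ℝ) (k : ℤ) : ℝ[T;T⁻¹] :=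
  ofCoeff <| Finsupp.onFinset (Icc 0 m) (fun i ↦ binomZ m i * a (i + k)) fun i hi ↦ by
    contrapose! hi
    rcases not_and_or.1 (mem_Icc.not.1 hi) with hi | hi
    · rw [binomZ_of_neg (by omega), Nat.cast_zero, zero_mul]
    · rw [binomZ_of_lt (by omega), Nat.cast_zero, zero_mul]

section binomWeighted

variable (m : ℤ) (a : ℤ → ℝ)

@[simp]
lemma coeff_binomWeighted (k i : ℤ) : (binomWeighted m a k).coeff i = binomZ m i * a (i + k) :=
  rfl

lemma coeff_binomWeighted_of_neg (k i : ℤ) (hi : i < 0) : (binomWeighted m a k).coeff i = 0 := by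
  rw [coeff_binomWeighted, binomZ_of_neg hi, Nat.cast_zero, zero_mul]

lemma coeff_binomWeighted_sub_add_T_mul_sub (hm : 0 ≤ m) (i : ℤ) :
    (binomWeighted m a 0 - binomWeighted m a 1 +
        T 1 * (binomWeighted m a 1 - binomWeighted m a 2)).coeff i =
      (a i - a (i + 1)) * binomZ (m + 1) i := by
  simp only [coeff_add, coeff_sub, Finsupp.add_apply, Finsupp.sub_apply, coeff_T_mul,
    coeff_binomWeighted, binomZ_add_one hm, sub_add_cancel]
  push_cast
  rw [add_zero, show i - 1 + 2 = i + 1 by ring]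
  ring

lemma coeff_binomWeighted_add_T_mul_add_T_mul (hm : 0 ≤ m) (i : ℤ) :
    (binomWeighted m a 0 + T 1 * (binomWeighted m a 1 + binomWeighted m a 1) +
        T 1 * (T 1 * binomWeighted m a 2)).coeff i =
      a i * binomZ (m + 2) i := by
  simp only [coeff_add, Finsupp.add_apply, coeff_T_mul, coeff_binomWeighted,
    show m + 2 = m + 1 + 1 by ring, binomZ_add_one (show 0 ≤ m + 1 by omega), binomZ_add_one hm]
  push_cast
  rw [add_zero, sub_add_cancel, show i - 1 - 1 + 2 = i by ring]
  ring

lemma coeff_binomWeighted_sub_sub_add (i : ℤ) :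
    (binomWeighted m a 0 - binomWeighted m a 1 - binomWeighted m a 1 +
        binomWeighted m a 2).coeff i =
      (a i - 2 * a (i + 1) + a (i + 2)) * binomZ m i := by
  simp only [coeff_add, coeff_sub, Finsupp.add_apply, Finsupp.sub_apply, coeff_binomWeighted,
    add_zero]
  ring

lemma coeff_binomWeighted_mul_sub_mul_nonneg (ha : IsLogConcaveSeq a) (k : ℤ) :
    0 ≤ (binomWeighted m a 1 * binomWeighted m a 1 -
      binomWeighted m a 2 * binomWeighted m a 0).coeff k := by
  have hneg := coeff_binomWeighted_of_neg m a
  rw [coeff_sub, Finsupp.sub_apply,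
    coeff_mul_eq_sum_Icc (hneg 1) (hneg 1) (l := -1) (by norm_num),
    coeff_mul_eq_sum_Icc (hneg 2) (hneg 0) (l := -1) (by norm_num), ← sum_sub_distrib]
  convert (isLogConcaveSeq_binomZ m).sum_Icc_mul_sub_mul_nonneg ha k using 2 with i
  simp only [coeff_binomWeighted, add_zero]
  ring

theorem sum_mul_binomZ_le_of_nonneg (hm : 0 ≤ m) (ha : IsLogConcaveSeq a) (n : ℤ) :
    ∑ i ∈ Icc 0 n, a i * (a (n - i) - 2 * a (n - i + 1) + a (n - i + 2)) *
        (binomZ (m + 2) i : ℝ) * (binomZ m (n - i) : ℝ) ≤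
      ∑ i ∈ Icc 0 n, (a i - a (i + 1)) * (a (n - i) - a (n - i + 1)) *
        (binomZ (m + 1) i : ℝ) * (binomZ (m + 1) (n - i) : ℝ) := by
  have hD := coeff_binomWeighted_sub_add_T_mul_sub m a hm
  have hA := coeff_binomWeighted_add_T_mul_add_T_mul m a hm
  have hC := coeff_binomWeighted_sub_sub_add m a
  set W := binomWeighted m a
  set D := W 0 - W 1 + T 1 * (W 1 - W 2) with hD_def
  set A := W 0 + T 1 * (W 1 + W 1) + T 1 * (T 1 * W 2) with hA_def
  set C := W 0 - W 1 - W 1 + W 2 with hC_def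
  have hsq : D * D - A * C = (1 + T 1) ^ 2 * (W 1 * W 1 - W 2 * W 0) := by
    rw [hD_def, hA_def, hC_def]
    ring
  have hD0 : ∀ i < 0, D.coeff i = 0 := fun i hi ↦ by simp [hD, binomZ_of_neg hi]
  have hA0 : ∀ i < 0, A.coeff i = 0 := fun i hi ↦ by simp [hA, binomZ_of_neg hi]
  have hC0 : ∀ i < 0, C.coeff i = 0 := fun i hi ↦ by simp [hC, binomZ_of_neg hi]
  calc _ = (A * C).coeff n := by
        rw [coeff_mul_eq_sum_Icc hA0 hC0 le_rfl]
        exact sum_congr rfl fun i _ ↦ by rw [hA, hC]; ring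
    _ ≤ (D * D).coeff n := by
        rw [← sub_nonneg, ← Finsupp.sub_apply, ← coeff_sub, hsq]
        exact coeff_one_add_T_sq_mul_nonneg (coeff_binomWeighted_mul_sub_mul_nonneg m a ha) n
    _ = _ := by
        rw [coeff_mul_eq_sum_Icc hD0 hD0 le_rfl]
        exact sum_congr rfl fun i _ ↦ by rw [hD, hD]; ring

lemma sum_mul_binomZ_le_of_neg (hm : m < 0) (n : ℤ) :
    ∑ i ∈ Icc 0 n, a i * (a (n - i) - 2 * a (n - i + 1) + a (n - i + 2)) *
        (binomZ (m + 2) i : ℝ) * (binomZ m (n - i) : ℝ) ≤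
      ∑ i ∈ Icc 0 n, (a i - a (i + 1)) * (a (n - i) - a (n - i + 1)) *
        (binomZ (m + 1) i : ℝ) * (binomZ (m + 1) (n - i) : ℝ) := by
  have h0 : ∀ k, binomZ m k = 0 := fun k ↦ if_neg (by omega)
  have h1 : ∀ k ≠ 0, binomZ (m + 1) k = 0 := fun k hk ↦ if_neg (by omega)
  rw [sum_eq_zero fun i _ ↦ by rw [h0, Nat.cast_zero, mul_zero]]
  refine sum_nonneg fun i _ ↦ ?_
  by_cases hi : i = 0 ∧ n - i = 0
  · obtain ⟨rfl, hn⟩ := hi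
    rw [hn]
    exact mul_nonneg (mul_nonneg (mul_self_nonneg _) (Nat.cast_nonneg _)) (Nat.cast_nonneg _)
  · rcases not_and_or.1 hi with hi | hi <;> simp [h1 _ hi]

theorem sum_mul_binomZ_le (ha : IsLogConcaveSeq a) (n : ℤ) :
    ∑ i ∈ Icc 0 n, a i * (a (n - i) - 2 * a (n - i + 1) + a (n - i + 2)) *
        (binomZ (m + 2) i : ℝ) * (binomZ m (n - i) : ℝ) ≤
      ∑ i ∈ Icc 0 n, (a i - a (i + 1)) * (a (n - i) - a (n - i + 1)) *
        (binomZ (m + 1) i : ℝ) * (binomZ (m + 1) (n - i) : ℝ) :=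
  (lt_or_ge m 0).elim (sum_mul_binomZ_le_of_neg m a · n) (sum_mul_binomZ_le_of_nonneg m a · ha n)

end binomWeighted

theorem mixture_sum_ineq_discrete_general
    (M : ℕ) (α : ℤ → ℝ)
    (hα_nonneg : ∀ i, 0 ≤ α i)
    (hα_zero : ∀ i : ℤ, i < 0 ∨ (M : ℤ) < i → α i = 0)
    (hα_logconcave : ∀ i j : ℤ, 1 ≤ i → i ≤ j → j + 1 ≤ (M : ℤ) →
      α (i - 1) * α (j + 1) ≤ α i * α j)
    (n : ℕ) :
    (∑ i ∈ Finset.Icc (0 : ℤ) (n : ℤ),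
        α i * (α ((n : ℤ) - i) - 2 * α ((n : ℤ) - i + 1) + α ((n : ℤ) - i + 2)) *
          (binomZ (M : ℤ) i : ℝ) * (binomZ ((M : ℤ) - 2) ((n : ℤ) - i) : ℝ)) ≤
      ∑ i ∈ Finset.Icc (0 : ℤ) (n : ℤ),
        (α i - α (i + 1)) * (α ((n : ℤ) - i) - α ((n : ℤ) - i + 1)) *
          (binomZ ((M : ℤ) - 1) i : ℝ) * (binomZ ((M : ℤ) - 1) ((n : ℤ) - i) : ℝ) := by
  have h := sum_mul_binomZ_le ((M : ℤ) - 2) α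
    (.of_eq_zero_outside hα_nonneg hα_zero hα_logconcave) n
  rwa [sub_add_cancel, show (M : ℤ) - 2 + 1 = M - 1 by ring] at h

theorem mixture_sum_ineq_discrete
    (M : ℕ) (hM : 0 < M) (α : ℤ → ℝ)
    (hα_nonneg : ∀ i, 0 ≤ α i)
    (hα_zero : ∀ i : ℤ, i < 0 ∨ (M : ℤ) < i → α i = 0)
    (hα_logconcave : ∀ i j : ℤ, 1 ≤ i → i ≤ j → j + 1 ≤ (M : ℤ) →
      α (i - 1) * α (j + 1) ≤ α i * α j)
    (n : ℕ) (hn : (n : ℤ) ≤ 2 * (M : ℤ) - 2) :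
    (∑ i ∈ Finset.Icc (0 : ℤ) (n : ℤ),
        α i * (α ((n : ℤ) - i) - 2 * α ((n : ℤ) - i + 1) + α ((n : ℤ) - i + 2)) *
          (binomZ (M : ℤ) i : ℝ) * (binomZ ((M : ℤ) - 2) ((n : ℤ) - i) : ℝ)) ≤
      ∑ i ∈ Finset.Icc (0 : ℤ) (n : ℤ),
        (α i - α (i + 1)) * (α ((n : ℤ) - i) - α ((n : ℤ) - i + 1)) *
          (binomZ ((M : ℤ) - 1) i : ℝ) * (binomZ ((M : ℤ) - 1) ((n : ℤ) - i) : ℝ) :=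
  mixture_sum_ineq_discrete_general M α hα_nonneg hα_zero hα_logconcave n
end
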